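/- Fix real numbers q, ρ, y. Let a_{n,2i} (0 ≤ i ≤ ⌊n/2⌋) be the coefficients in the expansion x^n = Σ_{i=0}^{⌊n/2⌋} a_{n,2i}·H_{n−2i}(x|q) of the monomial x^n in q-Hermite polynomials, and define m_n(y) = Σ_{k=0}^{⌊n/2⌋} ρ^{n−2k}·a_{n,2k}·H_{n−2k}(y|q). Let S_n(y) = [ m_{i+j}(y) ]_{i,j=0,…,n−1} be the n×n Hankel matrix of these quantities. Then for every n ≥ 1, det S_{n+1}(y) = [n]_q! · ∏_{i=1}^{n}(1 − ρ²·q^{i−1}) · det S_n(y); in particular the ratio det S_{n+1}/det S_n does not depend on y. -/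

import Mathlib

open MeasureTheory Finset

noncomputable section

/-- The `q`-integer `[n]_q = 1 + q + ⋯ + q^{n-1}`. -/
def qInt (q : ℝ) (n : ℕ) : ℝ := ∑ i ∈ Finset.range n, q ^ i

/-- The (renormalized) continuous `q`-Hermite polynomials, as functions:
`H_{-1} = 0`, `H_0 = 1`, `H_{n+1}(x) = x H_n(x) - [n]_q H_{n-1}(x)`. -/
def qHermite (q : ℝ) : ℕ → ℝ → ℝ
  | 0 => fun _ => 1
  | 1 => fun x => x
  | n + 2 => fun x => x * qHermite q (n + 1) x - qInt q (n + 1) * qHermite q n x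


/-- The `q`-factorial `[n]_q! = [1]_q [2]_q ⋯ [n]_q`, with `[0]_q! = 1`. -/
def qFact (q : ℝ) (n : ℕ) : ℝ := ∏ i ∈ Finset.range n, qInt q (i + 1)

/-!
Let `L` be the linear functional on `ℝ[X]` with `L(X^k) = m_k`. Applying `L` to the expansion of
`X^k` and inducting on `k` gives `L(H_k) = ρ^k H_k(y)`. The monic Al-Salam–Chihara polynomials
`Q_n` then satisfy `L(H_k Q_n) = [k]_q [k-1]_q ⋯ [k-n+1]_q ∏_{i<n} (1 - ρ² q^i) ρ^{k-n} H_{k-n}(y)`,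
so `Q_n` is `L`-orthogonal to every polynomial of degree `< n`, while
`L(X^n Q_n) = [n]_q! ∏_{i<n} (1 - ρ² q^i)`. Adding to the last row of the Hankel matrix the
combination of the other rows given by the coefficients of `Q_n` turns that row into
`(0, …, 0, L(X^n Q_n))`, and expanding along it gives the recursion.
-/

open Polynomial

section ThreeTerm

variable {R : Type*} [Ring R] [Nontrivial R]

theorem monic_natDegree_of_three_term (P : ℕ → R[X]) (b c : ℕ → R) (h0 : P 0 = 1)
    (h1 : P 1 = X - C (b 0))
    (hrec : ∀ n, P (n + 2) = (X - C (b (n + 1))) * P (n + 1) - C (c n) * P n) (n : ℕ) :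
    (P n).Monic ∧ (P n).natDegree = n := by
  induction n using Nat.twoStepInduction with
  | zero => simp [h0]
  | one => simp [h1, monic_X_sub_C]
  | more n ih ih' =>
    have hlead : ((X - C (b (n + 1))) * P (n + 1)).Monic := (monic_X_sub_C _).mul ih'.1
    have hdeg : ((X - C (b (n + 1))) * P (n + 1)).natDegree = n + 2 := by
      rw [(monic_X_sub_C _).natDegree_mul ih'.1, natDegree_X_sub_C, ih'.2]; omega
    have hlt : (C (c n) * P n).natDegree < ((X - C (b (n + 1))) * P (n + 1)).natDegree := by
      have := natDegree_C_mul_le (c n) (P n); omega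
    rw [hrec]
    exact ⟨hlead.sub_of_left (degree_lt_degree hlt),
      (natDegree_sub_eq_left_of_natDegree_lt hlt).trans hdeg⟩

end ThreeTerm

section Hankel

variable {R : Type*} [CommRing R]

def momentFunctional (m : ℕ → R) : R[X] →ₗ[R] R :=
  lsum fun k => LinearMap.id.smulRight (m k)

@[simp]
theorem momentFunctional_X_pow (m : ℕ → R) (k : ℕ) : momentFunctional m (X ^ k) = m k := by
  simp [momentFunctional, X_pow_eq_monomial]

@[simp]
theorem momentFunctional_C_mul (m : ℕ → R) (c : R) (p : R[X]) :
    momentFunctional m (C c * p) = c * momentFunctional m p := by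
  rw [← smul_eq_C_mul, map_smul, smul_eq_mul]

theorem momentFunctional_X_pow_mul (m : ℕ → R) (j : ℕ) (p : R[X]) :
    momentFunctional m (X ^ j * p) =
      ∑ l ∈ Finset.range (p.natDegree + 1), p.coeff l * m (j + l) := by
  conv_lhs => rw [p.as_sum_range_C_mul_X_pow, Finset.mul_sum]
  simp [map_sum, mul_left_comm _ (C _), ← pow_add]

theorem det_hankel_succ_of_orthogonal (m : ℕ → R) (n : ℕ) (p : R[X]) (hp : p.Monic)
    (hdeg : p.natDegree = n) (horth : ∀ j < n, momentFunctional m (X ^ j * p) = 0) :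
    (Matrix.of fun i j : Fin (n + 1) => m (i + j)).det =
      momentFunctional m (X ^ n * p) * (Matrix.of fun i j : Fin n => m (i + j)).det := by
  let M := Matrix.of fun i j : Fin (n + 1) => m (i + j)
  let N := M.updateRow (Fin.last n) (∑ l : Fin (n + 1), p.coeff l • M l)
  have hNlast (j : Fin (n + 1)) :
      N (Fin.last n) j = momentFunctional m (X ^ (j : ℕ) * p) := by
    simp only [N, Matrix.updateRow_self]
    rw [momentFunctional_X_pow_mul, hdeg, ← Fin.sum_univ_eq_sum_range]
    simp [M, add_comm]
  have hdet : N.det = M.det := by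
    have hc : p.coeff n = 1 := hdeg ▸ hp.coeff_natDegree
    simp [N, Matrix.det_updateRow_sum, hc]
  rw [← hdet, Matrix.det_succ_row _ (Fin.last n), Fintype.sum_eq_single (Fin.last n)]
  · have hminor :
        N.submatrix Fin.castSucc Fin.castSucc = Matrix.of fun i j : Fin n => m (i + j) := by
      ext i j
      simp [N, M]
    simp [hNlast, hminor]
  · intro j hj
    rw [hNlast, horth _ (Fin.val_lt_last hj), mul_zero, zero_mul]

end Hankel

theorem qInt_zero (q : ℝ) : qInt q 0 = 0 := by simp [qInt]

theorem qInt_add (q : ℝ) (s t : ℕ) : qInt q (s + t) = qInt q s + q ^ s * qInt q t := by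
  simp [qInt, Finset.sum_range_add, Finset.mul_sum, pow_add]

def qDescFactorial (q : ℝ) (k n : ℕ) : ℝ := ∏ j ∈ Finset.range n, qInt q (k - j)

@[simp]
theorem qDescFactorial_zero_right (q : ℝ) (k : ℕ) : qDescFactorial q k 0 = 1 := by
  simp [qDescFactorial]

theorem qDescFactorial_succ_right (q : ℝ) (k n : ℕ) :
    qDescFactorial q k (n + 1) = qDescFactorial q k n * qInt q (k - n) :=
  Finset.prod_range_succ _ _

theorem qDescFactorial_succ_succ (q : ℝ) (k n : ℕ) :
    qDescFactorial q (k + 1) (n + 1) = qInt q (k + 1) * qDescFactorial q k n := by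
  simp [qDescFactorial, Finset.prod_range_succ', mul_comm]

theorem qDescFactorial_eq_zero (q : ℝ) {k n : ℕ} (h : k < n) : qDescFactorial q k n = 0 :=
  Finset.prod_eq_zero (Finset.mem_range.mpr h) (by simp [qInt_zero])

theorem qInt_mul_qDescFactorial_pred (q : ℝ) (k n : ℕ) :
    qInt q k * qDescFactorial q (k - 1) (n + 1) = qDescFactorial q k (n + 2) := by
  cases k with
  | zero => simp [qInt_zero, qDescFactorial_eq_zero]
  | succ k => simp [qDescFactorial_succ_succ]

theorem qDescFactorial_self (q : ℝ) (n : ℕ) : qDescFactorial q n n = qFact q n := by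
  rw [qDescFactorial, ← Finset.prod_range_reflect]
  refine Finset.prod_congr rfl fun j hj => ?_
  rw [Finset.mem_range] at hj
  congr 1
  omega

def qHermitePoly (q : ℝ) : ℕ → ℝ[X]
  | 0 => 1
  | 1 => X
  | n + 2 => X * qHermitePoly q (n + 1) - C (qInt q (n + 1)) * qHermitePoly q n

@[simp]
theorem eval_qHermitePoly (q x : ℝ) (n : ℕ) : (qHermitePoly q n).eval x = qHermite q n x := by
  induction n using Nat.twoStepInduction with
  | zero => simp [qHermitePoly, qHermite]
  | one => simp [qHermitePoly, qHermite]
  | more n ih ih' => simp [qHermitePoly, qHermite, ih, ih']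

theorem qHermitePoly_monic_natDegree (q : ℝ) (n : ℕ) :
    (qHermitePoly q n).Monic ∧ (qHermitePoly q n).natDegree = n :=
  monic_natDegree_of_three_term _ 0 (fun n => qInt q (n + 1)) rfl (by simp [qHermitePoly])
    (fun n => by simp [qHermitePoly]) n

-- Also for `k = 0`: the truncated index `k - 1` is multiplied by `[0]_q = 0`.
theorem X_mul_qHermitePoly (q : ℝ) (k : ℕ) :
    X * qHermitePoly q k = qHermitePoly q (k + 1) + C (qInt q k) * qHermitePoly q (k - 1) := by
  cases k with
  | zero => simp [qHermitePoly, qInt_zero]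
  | succ k => simp [qHermitePoly]

theorem pow_mul_qHermite_succ (q ρ y : ℝ) (k : ℕ) :
    ρ ^ (k + 1) * qHermite q (k + 1) y =
      ρ * y * (ρ ^ k * qHermite q k y) -
        ρ ^ 2 * qInt q k * (ρ ^ (k - 1) * qHermite q (k - 1) y) := by
  have h := congrArg (eval y) (X_mul_qHermitePoly q k)
  simp only [eval_mul, eval_add, eval_X, eval_C, eval_qHermitePoly] at h
  cases k with
  | zero => simp [qHermite, qInt_zero]
  | succ k => simp only [Nat.add_sub_cancel] at h ⊢; linear_combination -ρ ^ (k + 2) * h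

theorem qInt_mul_pow_mul_qHermite_recurrence (q ρ y : ℝ) (t : ℕ) :
    qInt q t * (ρ ^ t * qHermite q t y - ρ * y * (ρ ^ (t - 1) * qHermite q (t - 1) y)
      + ρ ^ 2 * qInt q (t - 1) * (ρ ^ (t - 2) * qHermite q (t - 2) y)) = 0 := by
  cases t with
  | zero => simp [qInt_zero]
  | succ s => simp [pow_mul_qHermite_succ, show s + 1 - 2 = s - 1 by omega]

def alSalamChihara (q ρ y : ℝ) : ℕ → ℝ[X]
  | 0 => 1
  | 1 => X - C (ρ * y)
  | n + 2 => (X - C (ρ * y * q ^ (n + 1))) * alSalamChihara q ρ y (n + 1)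
      - C (qInt q (n + 1) * (1 - ρ ^ 2 * q ^ n)) * alSalamChihara q ρ y n

theorem alSalamChihara_monic_natDegree (q ρ y : ℝ) (n : ℕ) :
    (alSalamChihara q ρ y n).Monic ∧ (alSalamChihara q ρ y n).natDegree = n :=
  monic_natDegree_of_three_term _ (fun n => ρ * y * q ^ n)
    (fun n => qInt q (n + 1) * (1 - ρ ^ 2 * q ^ n)) rfl (by simp [alSalamChihara])
    (fun n => rfl) n

theorem qHermitePoly_mul_alSalamChihara_add_two (q ρ y : ℝ) (k n : ℕ) :
    qHermitePoly q k * alSalamChihara q ρ y (n + 2) =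
      qHermitePoly q (k + 1) * alSalamChihara q ρ y (n + 1)
        + C (qInt q k) * (qHermitePoly q (k - 1) * alSalamChihara q ρ y (n + 1))
        - C (ρ * y * q ^ (n + 1)) * (qHermitePoly q k * alSalamChihara q ρ y (n + 1))
        - C (qInt q (n + 1) * (1 - ρ ^ 2 * q ^ n)) *
            (qHermitePoly q k * alSalamChihara q ρ y n) := by
  rw [alSalamChihara]
  linear_combination alSalamChihara q ρ y (n + 1) * X_mul_qHermitePoly q k

section Moments

variable {q ρ y : ℝ} {m : ℕ → ℝ}

theorem momentFunctional_qHermitePoly_mul_alSalamChihara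
    (hH : ∀ k, momentFunctional m (qHermitePoly q k) = ρ ^ k * qHermite q k y) (n k : ℕ) :
    momentFunctional m (qHermitePoly q k * alSalamChihara q ρ y n) =
      qDescFactorial q k n * (∏ i ∈ Finset.range n, (1 - ρ ^ 2 * q ^ i)) *
        (ρ ^ (k - n) * qHermite q (k - n) y) := by
  induction n using Nat.twoStepInduction generalizing k with
  | zero => simp [alSalamChihara, hH]
  | one =>
    have hexp : qHermitePoly q k * alSalamChihara q ρ y 1 = qHermitePoly q (k + 1)
        + C (qInt q k) * qHermitePoly q (k - 1) - C (ρ * y) * qHermitePoly q k := by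
      rw [alSalamChihara, ← X_mul_qHermitePoly]; ring
    simp only [hexp, map_sub, map_add, momentFunctional_C_mul, hH, qDescFactorial_succ_right,
      qDescFactorial_zero_right, pow_mul_qHermite_succ]
    simp only [tsub_zero, one_mul, range_one, prod_singleton, pow_zero, mul_one]
    ring
  | more n ih ih' =>
    simp only [qHermitePoly_mul_alSalamChihara_add_two, map_sub, map_add, momentFunctional_C_mul, ih, ih']
    rcases lt_or_ge k n with hkn | hkn
    · simp [qDescFactorial_eq_zero, hkn, show k < n + 1 by omega, show k - 1 < n + 1 by omega,
        show k < n + 2 by omega]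
    obtain ⟨t, rfl⟩ := Nat.exists_eq_add_of_le hkn
    have hF := qInt_mul_qDescFactorial_pred q (n + t) n
    have hq := qInt_add q (n + 1) t
    have hrec := qInt_mul_pow_mul_qHermite_recurrence q ρ y t
    rw [qDescFactorial_succ_succ]
    simp only [qDescFactorial_succ_right, Finset.prod_range_succ,
      show n + t - (n + 2) = t - 2 by omega, show n + t + 1 - (n + 1) = t by omega,
      show n + t - 1 - (n + 1) = t - 2 by omega, show n + t - (n + 1) = t - 1 by omega,
      show n + t - n = t by omega, show n + 1 + t = n + t + 1 by omega] at hF hq ⊢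
    rw [hq]
    -- Up to common factors this is `[t]_q` times the recurrence of `ρ^t H_t(y)`, once
    -- `[n+t+1]_q = [n+1]_q + q^{n+1} [t]_q` is used.
    linear_combination (∏ i ∈ Finset.range n, (1 - ρ ^ 2 * q ^ i)) * (1 - ρ ^ 2 * q ^ n) *
      ((ρ ^ (t - 2) * qHermite q (t - 2) y) * hF
        + qDescFactorial q (n + t) n * q ^ (n + 1) * hrec)

variable {a : ℕ → ℕ → ℝ}

def IsQHermiteExpansion (q : ℝ) (a : ℕ → ℕ → ℝ) : Prop :=
  ∀ (n : ℕ) (x : ℝ),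
    x ^ n = ∑ i ∈ Finset.range (n / 2 + 1), a n (2 * i) * qHermite q (n - 2 * i) x

theorem X_pow_eq_sum_qHermitePoly (ha : IsQHermiteExpansion q a) (n : ℕ) :
    (X : ℝ[X]) ^ n =
      ∑ i ∈ Finset.range (n / 2 + 1), C (a n (2 * i)) * qHermitePoly q (n - 2 * i) :=
  Polynomial.funext fun x => by simpa [eval_finsetSum] using ha n x

theorem expansion_coeff_zero_eq_one (ha : IsQHermiteExpansion q a) (n : ℕ) : a n 0 = 1 := by
  have h := congrArg (coeff · n) (X_pow_eq_sum_qHermitePoly ha n)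
  simp only [coeff_X_pow_self, finsetSum_coeff, coeff_C_mul] at h
  rw [Finset.sum_eq_single_of_mem 0 (by simp)] at h
  · obtain ⟨hmonic, hdeg⟩ := qHermitePoly_monic_natDegree q n
    have hlead : (qHermitePoly q n).coeff n = 1 := by simpa [hdeg] using hmonic.coeff_natDegree
    rw [mul_zero, Nat.sub_zero, hlead, mul_one] at h
    exact h.symm
  · intro i hi hi0
    rw [Finset.mem_range] at hi
    rw [coeff_eq_zero_of_natDegree_lt, mul_zero]
    rw [(qHermitePoly_monic_natDegree q _).2]
    omega

theorem momentFunctional_qHermitePoly (ha : IsQHermiteExpansion q a)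
    (hm : ∀ n : ℕ, m n = ∑ k ∈ Finset.range (n / 2 + 1),
      ρ ^ (n - 2 * k) * a n (2 * k) * qHermite q (n - 2 * k) y) (k : ℕ) :
    momentFunctional m (qHermitePoly q k) = ρ ^ k * qHermite q k y := by
  induction k using Nat.strong_induction_on with
  | _ k ih =>
    have hsum : ∑ i ∈ Finset.range (k / 2 + 1), a k (2 * i) *
        (momentFunctional m (qHermitePoly q (k - 2 * i)) -
          ρ ^ (k - 2 * i) * qHermite q (k - 2 * i) y) = 0 := by
      have h := congrArg (momentFunctional m) (X_pow_eq_sum_qHermitePoly ha k)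
      simp only [momentFunctional_X_pow, map_sum, momentFunctional_C_mul] at h
      simp only [mul_sub, Finset.sum_sub_distrib, ← h, hm k]
      exact sub_eq_zero.mpr (Finset.sum_congr rfl fun i _ => by ring)
    rw [Finset.sum_eq_single_of_mem 0 (by simp) fun i hi hi0 => by
      rw [Finset.mem_range] at hi; rw [ih _ (by omega), sub_self, mul_zero]] at hsum
    simpa [expansion_coeff_zero_eq_one ha, sub_eq_zero] using hsum

theorem momentFunctional_X_pow_mul_alSalamChihara (ha : IsQHermiteExpansion q a)
    (hH : ∀ k, momentFunctional m (qHermitePoly q k) = ρ ^ k * qHermite q k y) (j n : ℕ) :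
    momentFunctional m (X ^ j * alSalamChihara q ρ y n) =
      ∑ i ∈ Finset.range (j / 2 + 1), a j (2 * i) *
        (qDescFactorial q (j - 2 * i) n * (∏ i ∈ Finset.range n, (1 - ρ ^ 2 * q ^ i)) *
          (ρ ^ (j - 2 * i - n) * qHermite q (j - 2 * i - n) y)) := by
  simp only [X_pow_eq_sum_qHermitePoly ha, Finset.sum_mul, map_sum, mul_assoc,
    momentFunctional_C_mul, momentFunctional_qHermitePoly_mul_alSalamChihara hH]

theorem momentFunctional_X_pow_mul_alSalamChihara_of_lt (ha : IsQHermiteExpansion q a)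
    (hH : ∀ k, momentFunctional m (qHermitePoly q k) = ρ ^ k * qHermite q k y)
    {j n : ℕ} (hj : j < n) :
    momentFunctional m (X ^ j * alSalamChihara q ρ y n) = 0 := by
  rw [momentFunctional_X_pow_mul_alSalamChihara ha hH]
  exact Finset.sum_eq_zero fun i _ => by rw [qDescFactorial_eq_zero q (by omega)]; ring

theorem momentFunctional_X_pow_mul_alSalamChihara_self (ha : IsQHermiteExpansion q a)
    (hH : ∀ k, momentFunctional m (qHermitePoly q k) = ρ ^ k * qHermite q k y) (n : ℕ) :
    momentFunctional m (X ^ n * alSalamChihara q ρ y n) =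
      qFact q n * ∏ i ∈ Finset.range n, (1 - ρ ^ 2 * q ^ i) := by
  rw [momentFunctional_X_pow_mul_alSalamChihara ha hH,
    Finset.sum_eq_single_of_mem 0 (by simp) fun i hi hi0 => by
      rw [Finset.mem_range] at hi; rw [qDescFactorial_eq_zero q (by omega)]; ring]
  simp [expansion_coeff_zero_eq_one ha, qDescFactorial_self, qHermite]

end Moments

theorem hankel_det_moments_general (q ρ y : ℝ) (a : ℕ → ℕ → ℝ)
    (ha : ∀ (n : ℕ) (x : ℝ),
      x ^ n = ∑ i ∈ Finset.range (n / 2 + 1), a n (2 * i) * qHermite q (n - 2 * i) x)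
    (m : ℕ → ℝ)
    (hm : ∀ n : ℕ,
      m n = ∑ k ∈ Finset.range (n / 2 + 1), ρ ^ (n - 2 * k) * a n (2 * k) *
        qHermite q (n - 2 * k) y)
    (n : ℕ) :
    (Matrix.of fun i j : Fin (n + 1) => m ((i : ℕ) + (j : ℕ))).det =
      qFact q n * (∏ i ∈ Finset.range n, (1 - ρ ^ 2 * q ^ i)) *
        (Matrix.of fun i j : Fin n => m ((i : ℕ) + (j : ℕ))).det := by
  have hH := momentFunctional_qHermitePoly ha hm
  obtain ⟨hmonic, hdeg⟩ := alSalamChihara_monic_natDegree q ρ y n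
  rw [det_hankel_succ_of_orthogonal m n _ hmonic hdeg
      (fun j hj => momentFunctional_X_pow_mul_alSalamChihara_of_lt ha hH hj),
    momentFunctional_X_pow_mul_alSalamChihara_self ha hH]

/-- Corollary 5: let `a n (2i)` be the coefficients of the expansion
`x^n = Σ_{i=0}^{⌊n/2⌋} a_{n,2i} H_{n-2i}(x|q)` of monomials in `q`-Hermite polynomials,
and let `m n = Σ_{k=0}^{⌊n/2⌋} ρ^{n-2k} a_{n,2k} H_{n-2k}(y|q)`.  Then the Hankel
determinants `det S_n`, where `S_n = [m_{i+j}]_{i,j=0,…,n-1}`, satisfy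
`det S_{n+1} = [n]_q! ∏_{i=1}^n (1 - ρ² q^{i-1}) det S_n` for every `n ≥ 1`;
in particular the ratio does not depend on `y`. -/
theorem hankel_det_moments (q ρ y : ℝ) (a : ℕ → ℕ → ℝ)
    (ha : ∀ (n : ℕ) (x : ℝ),
      x ^ n = ∑ i ∈ Finset.range (n / 2 + 1), a n (2 * i) * qHermite q (n - 2 * i) x)
    (m : ℕ → ℝ)
    (hm : ∀ n : ℕ,
      m n = ∑ k ∈ Finset.range (n / 2 + 1), ρ ^ (n - 2 * k) * a n (2 * k) *
        qHermite q (n - 2 * k) y)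
    (n : ℕ) (hn : 1 ≤ n) :
    (Matrix.of fun i j : Fin (n + 1) => m ((i : ℕ) + (j : ℕ))).det =
      qFact q n * (∏ i ∈ Finset.range n, (1 - ρ ^ 2 * q ^ i)) *
        (Matrix.of fun i j : Fin n => m ((i : ℕ) + (j : ℕ))).det :=
  hankel_det_moments_general q ρ y a ha m hm n
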